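/- arXiv:quant-ph/0611054 — 3 statements merged into one kernel-verified Lean document; each statement's English description precedes it below -/
import Mathlib

section
/- Let Σ_I = {0,1,…,m−1} with m ≥ 1, let S ⊆ Σ_I^n be a finite set of strings, and let Γ be any Hermitian S×S complex matrix. Let H = ℂ^S ⊗ ℂ^{[n]×Σ_I} with orthonormal basis |x⟩|i,p⟩ for x ∈ S, 1 ≤ i ≤ n, p ∈ Σ_I, and let O be the diagonal unitary on H defined by O|x⟩|i,p⟩ = e^{2πi·p·x_i/m}|x⟩|i,p⟩. Set G = Γ ⊗ I. Then for every positive semidefinite operator ρ on H with Tr(ρ) = 1 one has |Tr(G ρ) − Tr(G O ρ O*)| ≤ 2 max_{1≤i≤n} ‖Γ ∘ D_i‖. -/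
open scoped Matrix Kronecker ComplexOrder

/-- The spectral norm of a complex matrix, i.e. its operator norm as a map between
Euclidean spaces. -/
noncomputable def specNorm {p q : Type*} [Fintype p] [Fintype q] [DecidableEq q]
    (A : Matrix p q ℂ) : ℝ :=
  ‖LinearMap.toContinuousLinearMap (Matrix.toEuclideanLin A)‖

section helpers
variable {p q : Type*} [Fintype p] [Fintype q] [DecidableEq q]

lemma specNorm_nonneg (A : Matrix p q ℂ) : 0 ≤ specNorm A := norm_nonneg _

lemma norm_toEuclideanLin_le (A : Matrix p q ℂ) (v : EuclideanSpace ℂ q) :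
    ‖Matrix.toEuclideanLin A v‖ ≤ specNorm A * ‖v‖ := by
  simpa [specNorm] using (LinearMap.toContinuousLinearMap (Matrix.toEuclideanLin A)).le_opNorm v

lemma specNorm_le {A : Matrix p q ℂ} {c : ℝ} (hc : 0 ≤ c)
    (h : ∀ v : EuclideanSpace ℂ q, ‖Matrix.toEuclideanLin A v‖ ≤ c * ‖v‖) :
    specNorm A ≤ c :=
  ContinuousLinearMap.opNorm_le_bound _ hc (by simpa using h)

lemma specNorm_sub_le (A B : Matrix p q ℂ) :
    specNorm (A - B) ≤ specNorm A + specNorm B := by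
  unfold specNorm
  rw [map_sub, map_sub]
  exact norm_sub_le _ _

lemma toEuclideanLin_eq_mulVec (A : Matrix p q ℂ) (v : EuclideanSpace ℂ q) :
    Matrix.toEuclideanLin A v = (WithLp.equiv 2 (p → ℂ)).symm (A.mulVec ((WithLp.equiv 2 (q → ℂ)) v)) :=
  rfl

end helpers

section more
variable {k : Type*} [Fintype k] [DecidableEq k]

lemma toEuclideanLin_mul_apply {p' q : Type*} [Fintype p'] [Fintype q] [DecidableEq q]
    (M : Matrix p' k ℂ) (N : Matrix k q ℂ)
    (v : EuclideanSpace ℂ q) :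
    Matrix.toEuclideanLin (M * N) v = Matrix.toEuclideanLin M (Matrix.toEuclideanLin N v) := by
  simp [toEuclideanLin_eq_mulVec, Matrix.mulVec_mulVec]

lemma norm_diag_mulVec (e : k → ℂ) (he : ∀ x, ‖e x‖ = 1) (v : EuclideanSpace ℂ k) :
    ‖Matrix.toEuclideanLin (Matrix.diagonal e) v‖ = ‖v‖ := by
  rw [EuclideanSpace.norm_eq, EuclideanSpace.norm_eq]
  congr 1
  apply Finset.sum_congr rfl
  intro x _
  have h : Matrix.toEuclideanLin (Matrix.diagonal e) v x = e x * v x :=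
    Matrix.mulVec_diagonal e _ x
  rw [h, norm_mul, he, one_mul]

lemma specNorm_conj (A : Matrix k k ℂ) (e : k → ℂ) (he : ∀ x, ‖e x‖ = 1) :
    specNorm ((Matrix.diagonal e)ᴴ * A * Matrix.diagonal e) ≤ specNorm A := by
  apply specNorm_le (specNorm_nonneg A)
  intro v
  rw [toEuclideanLin_mul_apply, toEuclideanLin_mul_apply, Matrix.diagonal_conjTranspose,
    norm_diag_mulVec _ (fun x => by simpa using he x)]
  calc ‖Matrix.toEuclideanLin A (Matrix.toEuclideanLin (Matrix.diagonal e) v)‖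
      ≤ specNorm A * ‖Matrix.toEuclideanLin (Matrix.diagonal e) v‖ := norm_toEuclideanLin_le A _
    _ = specNorm A * ‖v‖ := by rw [norm_diag_mulVec e he]

lemma abs_trace_mul_le (A : Matrix k k ℂ) {ρ : Matrix k k ℂ} (hρ : ρ.PosSemidef) :
    ‖(A * ρ).trace‖ ≤ specNorm A * ρ.trace.re := by
  obtain ⟨C, rfl⟩ : ∃ C : Matrix k k ℂ, ρ = Cᴴ * C := by
    open scoped MatrixOrder in
    exact CStarAlgebra.nonneg_iff_eq_star_mul_self.mp hρ.nonneg
  set u : k → EuclideanSpace ℂ k :=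
    fun j => (WithLp.equiv 2 (k → ℂ)).symm (fun y => star (C j y)) with hu
  have htr : (A * (Cᴴ * C)).trace
      = ∑ j, (inner ℂ (u j) (Matrix.toEuclideanLin A (u j)) : ℂ) := by
    rw [← Matrix.mul_assoc, Matrix.trace_mul_cycle]
    rw [Matrix.trace]
    apply Finset.sum_congr rfl
    intro j _
    rw [PiLp.inner_apply]
    simp only [Matrix.diag_apply, Matrix.mul_apply, toEuclideanLin_eq_mulVec,
      WithLp.equiv_symm_apply, WithLp.ofLp_toLp, Matrix.mulVec, dotProduct, hu,
      RCLike.inner_apply, WithLp.equiv_apply, starRingEnd_apply, star_star,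
      Matrix.conjTranspose_apply, Finset.mul_sum]
    simp only [Finset.sum_mul]
    rw [Finset.sum_comm]
    apply Finset.sum_congr rfl
    intro x _
    exact Finset.sum_congr rfl fun y _ => by ring
  have hsum : ∑ j, ‖u j‖ ^ 2 = (Cᴴ * C).trace.re := by
    have h1 : ∀ j, ‖u j‖ ^ 2 = ∑ y, ‖C j y‖ ^ 2 := by
      intro j
      rw [EuclideanSpace.norm_eq, Real.sq_sqrt (by positivity)]
      apply Finset.sum_congr rfl
      intro y _
      simp [hu]
    have h2 : (Cᴴ * C).trace.re = ∑ j, ∑ y, ‖C y j‖ ^ 2 := by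
      rw [Matrix.trace, Complex.re_sum]
      apply Finset.sum_congr rfl
      intro j _
      rw [Matrix.diag_apply, Matrix.mul_apply, Complex.re_sum]
      apply Finset.sum_congr rfl
      intro y _
      have : Cᴴ j y * C y j = ((Complex.normSq (C y j) : ℝ) : ℂ) := by
        rw [Matrix.conjTranspose_apply, ← Complex.mul_conj, starRingEnd_apply]; ring
      rw [this, Complex.ofReal_re, Complex.normSq_eq_norm_sq]
    rw [h2, Finset.sum_comm]
    exact Finset.sum_congr rfl fun j _ => h1 j
  calc ‖(A * (Cᴴ * C)).trace‖
      ≤ ∑ j, ‖(inner ℂ (u j) (Matrix.toEuclideanLin A (u j)) : ℂ)‖ := by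
        rw [htr]; exact norm_sum_le _ _
    _ ≤ ∑ j, specNorm A * ‖u j‖ ^ 2 := by
        apply Finset.sum_le_sum
        intro j _
        calc ‖(inner ℂ (u j) (Matrix.toEuclideanLin A (u j)) : ℂ)‖
            ≤ ‖u j‖ * ‖Matrix.toEuclideanLin A (u j)‖ := by
              exact norm_inner_le_norm _ _
          _ ≤ ‖u j‖ * (specNorm A * ‖u j‖) :=
              mul_le_mul_of_nonneg_left (norm_toEuclideanLin_le A _) (norm_nonneg _)
          _ = specNorm A * ‖u j‖ ^ 2 := by ring
    _ = specNorm A * (Cᴴ * C).trace.re := by rw [← Finset.mul_sum, hsum]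

lemma trace_re_nonneg {k : Type*} [Fintype k] [DecidableEq k] {M : Matrix k k ℂ}
    (hM : M.PosSemidef) : 0 ≤ M.trace.re := by
  rw [Matrix.trace, Complex.re_sum]
  apply Finset.sum_nonneg
  intro x _
  have h := hM.re_dotProduct_nonneg (Pi.single x 1)
  simpa [dotProduct, Matrix.mulVec, Pi.single_apply] using h

end more

theorem stmt1
    {n m : ℕ} (hm : 1 ≤ m)
    (S : Finset (Fin n → Fin m))
    (Γ : Matrix ↥S ↥S ℂ) (hΓ : Γ.IsHermitian)
    (D : Fin n → Matrix ↥S ↥S ℂ)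
    (hD : ∀ i, D i = Matrix.of fun x y : ↥S =>
      if x.1 i ≠ y.1 i then 1 else 0)
    (O : Matrix (↥S × Fin n × Fin m) (↥S × Fin n × Fin m) ℂ)
    (hO : O = Matrix.diagonal fun q =>
      Complex.exp (2 * Real.pi * Complex.I * (q.2.2 : ℕ) *
        ((q.1 : Fin n → Fin m) q.2.1 : ℕ) / m))
    (G : Matrix (↥S × Fin n × Fin m) (↥S × Fin n × Fin m) ℂ)
    (hG : G = Γ ⊗ₖ (1 : Matrix (Fin n × Fin m) (Fin n × Fin m) ℂ))
    (ρ : Matrix (↥S × Fin n × Fin m) (↥S × Fin n × Fin m) ℂ)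
    (hρ : ρ.PosSemidef) (hρtr : ρ.trace = 1) :
    ‖(G * ρ).trace - (G * (O * ρ * Oᴴ)).trace‖ ≤
      2 * ⨆ i : Fin n, specNorm (Γ ⊙ D i) := by
  classical
  set d : Fin n → Fin m → ↥S → ℂ := fun i p x =>
    Complex.exp (2 * Real.pi * Complex.I * (p : ℕ) * ((x : Fin n → Fin m) i : ℕ) / m) with hd
  have hdval : ∀ (i : Fin n) (p : Fin m) (x : ↥S),
      d i p x = Complex.exp (((2 * Real.pi * (p : ℕ) * ((x : Fin n → Fin m) i : ℕ) / m : ℝ) : ℂ)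
        * Complex.I) := by
    intro i p x
    simp only [hd]
    congr 1
    push_cast
    ring
  have hdnorm : ∀ i p x, ‖d i p x‖ = 1 := by
    intro i p x
    rw [hdval]
    exact Complex.norm_exp_ofReal_mul_I _
  have hstar : ∀ (i : Fin n) (p : Fin m) (x y : ↥S), x.1 i = y.1 i →
      star (d i p x) * d i p y = 1 := by
    intro i p x y h
    rw [hdval, hdval, h]
    set z : ℂ := ((2 * Real.pi * (p : ℕ) * ((y : Fin n → Fin m) i : ℕ) / m : ℝ) : ℂ)
      * Complex.I with hz
    have h2 : star (Complex.exp z) = Complex.exp (-z) := by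
      rw [← starRingEnd_apply, ← Complex.exp_conj]
      congr 1
      rw [hz, map_mul, Complex.conj_I, Complex.conj_ofReal]
      ring
    rw [h2, ← Complex.exp_add, neg_add_cancel, Complex.exp_zero]
  set A : Fin n → Matrix ↥S ↥S ℂ := fun i => Γ ⊙ D i with hA
  set Dg : Fin n → Fin m → Matrix ↥S ↥S ℂ := fun i p => Matrix.diagonal (d i p) with hDg
  set Δ : Fin n → Fin m → Matrix ↥S ↥S ℂ := fun i p => A i - (Dg i p)ᴴ * A i * Dg i p with hΔ
  set R : Fin n → Fin m → Matrix ↥S ↥S ℂ :=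
    fun i p => ρ.submatrix (fun x => (x, i, p)) (fun x => (x, i, p)) with hR
  have hent : ∀ (i : Fin n) (p : Fin m) (x y : ↥S),
      Γ x y - star (d i p x) * Γ x y * d i p y = Δ i p x y := by
    intro i p x y
    rw [hΔ]
    simp only [Matrix.sub_apply, hDg, Matrix.diagonal_conjTranspose, Matrix.diagonal_mul,
      Matrix.mul_diagonal, hA, Matrix.hadamard_apply, hD, Matrix.of_apply, Pi.star_apply]
    by_cases hxy : x.1 i = y.1 i
    · rw [if_neg (by simpa using hxy)]
      have h1 := hstar i p x y hxy
      have h2 : star (d i p x) * Γ x y * d i p y = Γ x y := by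
        rw [mul_comm (star (d i p x)) (Γ x y), mul_assoc, h1, mul_one]
      rw [h2]
      ring
    · rw [if_pos (by simpa using hxy)]
      ring
  have hM : ∀ (x y : ↥S) (ip jq : Fin n × Fin m),
      (G - Oᴴ * G * O) ((x, ip) : ↥S × Fin n × Fin m) (y, jq)
        = if jq = ip then Δ ip.1 ip.2 x y else 0 := by
    intro x y ip jq
    rw [Matrix.sub_apply, hG, hO, Matrix.diagonal_conjTranspose, Matrix.mul_diagonal,
      Matrix.diagonal_mul, Matrix.kroneckerMap_apply, Matrix.one_apply]
    by_cases h : ip = jq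
    · subst h
      rw [if_pos rfl, if_pos rfl, mul_one, Pi.star_apply]
      exact hent ip.1 ip.2 x y
    · rw [if_neg h, if_neg (fun hh => h hh.symm)]
      ring
  have step1 : (G * ρ).trace - (G * (O * ρ * Oᴴ)).trace
      = ∑ ip : Fin n × Fin m, ((Δ ip.1 ip.2) * (R ip.1 ip.2)).trace := by
    have hcyc : (G * (O * ρ * Oᴴ)).trace = ((Oᴴ * G * O) * ρ).trace := by
      rw [← Matrix.mul_assoc, ← Matrix.mul_assoc, Matrix.trace_mul_cycle, ← Matrix.mul_assoc]
    rw [hcyc, ← Matrix.trace_sub, ← Matrix.sub_mul]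
    calc ((G - Oᴴ * G * O) * ρ).trace
        = ∑ x : ↥S, ∑ ip : Fin n × Fin m, ∑ y : ↥S, ∑ jq : Fin n × Fin m,
            (G - Oᴴ * G * O) ((x, ip) : ↥S × Fin n × Fin m) (y, jq) * ρ (y, jq) (x, ip) := by
          rw [Matrix.trace, Fintype.sum_prod_type]
          simp only [Matrix.diag_apply, Matrix.mul_apply, Fintype.sum_prod_type]
      _ = ∑ x : ↥S, ∑ ip : Fin n × Fin m, ∑ y : ↥S,
            Δ ip.1 ip.2 x y * ρ (y, ip) (x, ip) := by
          apply Finset.sum_congr rfl; intro x _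
          apply Finset.sum_congr rfl; intro ip _
          apply Finset.sum_congr rfl; intro y _
          simp only [hM x y ip, ite_mul, zero_mul, Finset.sum_ite_eq', Finset.mem_univ, if_true]
      _ = ∑ ip : Fin n × Fin m, ((Δ ip.1 ip.2) * (R ip.1 ip.2)).trace := by
          rw [Finset.sum_comm]
          apply Finset.sum_congr rfl; intro ip _
          rw [Matrix.trace]
          simp only [Matrix.diag_apply, Matrix.mul_apply, hR, Matrix.submatrix_apply]
  have step2 : ∀ (i : Fin n) (p : Fin m), (R i p).PosSemidef :=
    fun i p => hρ.submatrix _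
  have step3 : ∀ (i : Fin n) (p : Fin m), specNorm (Δ i p) ≤ 2 * specNorm (A i) := by
    intro i p
    rw [hΔ]
    calc specNorm (A i - (Dg i p)ᴴ * A i * Dg i p)
        ≤ specNorm (A i) + specNorm ((Dg i p)ᴴ * A i * Dg i p) := specNorm_sub_le _ _
      _ ≤ specNorm (A i) + specNorm (A i) := by
          gcongr
          exact specNorm_conj (A i) (d i p) (hdnorm i p)
      _ = 2 * specNorm (A i) := by ring
  have step4 : ∀ i : Fin n, specNorm (A i) ≤ ⨆ i : Fin n, specNorm (Γ ⊙ D i) := by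
    intro i
    simpa [hA] using
      le_ciSup (f := fun i => specNorm (Γ ⊙ D i)) (Set.Finite.bddAbove (Set.finite_range _)) i
  have step5 : ∑ ip : Fin n × Fin m, (R ip.1 ip.2).trace.re = 1 := by
    have h1 : ρ.trace = ∑ ip : Fin n × Fin m, (R ip.1 ip.2).trace := by
      rw [Matrix.trace, Fintype.sum_prod_type, Finset.sum_comm]
      apply Finset.sum_congr rfl
      intro ip _
      rw [Matrix.trace]
      apply Finset.sum_congr rfl
      intro x _
      simp [hR]
    rw [← Complex.re_sum, ← h1, hρtr, Complex.one_re]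
  rw [step1]
  calc ‖∑ ip : Fin n × Fin m, ((Δ ip.1 ip.2) * (R ip.1 ip.2)).trace‖
      ≤ ∑ ip : Fin n × Fin m, ‖((Δ ip.1 ip.2) * (R ip.1 ip.2)).trace‖ :=
        norm_sum_le _ _
    _ ≤ ∑ ip : Fin n × Fin m,
          (2 * ⨆ i : Fin n, specNorm (Γ ⊙ D i)) * (R ip.1 ip.2).trace.re := by
        apply Finset.sum_le_sum
        intro ip _
        calc ‖((Δ ip.1 ip.2) * (R ip.1 ip.2)).trace‖
            ≤ specNorm (Δ ip.1 ip.2) * (R ip.1 ip.2).trace.re :=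
              abs_trace_mul_le _ (step2 ip.1 ip.2)
          _ ≤ (2 * ⨆ i : Fin n, specNorm (Γ ⊙ D i)) * (R ip.1 ip.2).trace.re := by
              apply mul_le_mul_of_nonneg_right _ (trace_re_nonneg (step2 ip.1 ip.2))
              calc specNorm (Δ ip.1 ip.2) ≤ 2 * specNorm (A ip.1) := step3 ip.1 ip.2
                _ ≤ 2 * ⨆ i : Fin n, specNorm (Γ ⊙ D i) := by
                    have := step4 ip.1
                    linarith
    _ = 2 * ⨆ i : Fin n, specNorm (Γ ⊙ D i) := by
        rw [← Finset.mul_sum, step5, mul_one]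
end

section
/- Let H be a finite-dimensional complex Hilbert space, let ψ_x, ψ_y ∈ H be unit vectors, and let 0 ≤ ε ≤ 1/2. There exist positive semidefinite operators E_x, E_y on H with E_x + E_y = I, ⟨ψ_x, E_x ψ_x⟩ ≥ 1−ε and ⟨ψ_y, E_y ψ_y⟩ ≥ 1−ε, if and only if |⟨ψ_x, ψ_y⟩| ≤ 2√(ε(1−ε)). -/
set_option maxHeartbeats 1000000

open ContinuousLinearMap in
lemma cs_real {H : Type*} [NormedAddCommGroup H] [InnerProductSpace ℂ H] [CompleteSpace H]
    {T : H →L[ℂ] H} (hT : T.IsPositive) (u v : H) {m : ℝ}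
    (hm : (inner ℂ u (T v) : ℂ) = (m : ℂ)) :
    m ^ 2 ≤ (inner ℂ u (T u) : ℂ).re * (inner ℂ v (T v) : ℂ).re := by
  set A : ℝ := (inner ℂ u (T u) : ℂ).re with hA
  set C : ℝ := (inner ℂ v (T v) : ℂ).re with hC
  have hsym := hT.1
  have hvu : (inner ℂ v (T u) : ℂ) = (m : ℂ) := by
    have h := hsym v u
    simp only [ContinuousLinearMap.coe_coe] at h
    rw [← h, ← inner_conj_symm, hm, Complex.conj_ofReal]
  have key : ∀ t : ℝ, 0 ≤ C * (t * t) + (-(2 * m)) * t + A := by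
    intro t
    have h0 : 0 ≤ (inner ℂ (u - (t:ℂ) • v) (T (u - (t:ℂ) • v)) : ℂ).re := by
      have := hT.re_inner_nonneg_right (u - (t:ℂ) • v)
      simpa only [RCLike.re_to_complex] using this
    have hexp : (inner ℂ (u - (t:ℂ) • v) (T (u - (t:ℂ) • v)) : ℂ)
        = inner ℂ u (T u) - ((t * m : ℝ) : ℂ) - ((t * m : ℝ) : ℂ)
          + ((t * t : ℝ) : ℂ) * inner ℂ v (T v) := by
      rw [map_sub, map_smul]
      simp only [inner_sub_left, inner_sub_right, inner_smul_left, inner_smul_right,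
        Complex.conj_ofReal, hm, hvu, Complex.ofReal_mul]
      ring
    rw [hexp] at h0
    simp only [Complex.add_re, Complex.sub_re, Complex.ofReal_re,
      Complex.re_ofReal_mul] at h0
    linarith
  have hd := discrim_le_zero key
  unfold discrim at hd
  nlinarith [hd]

open ContinuousLinearMap in
lemma cs_op {H : Type*} [NormedAddCommGroup H] [InnerProductSpace ℂ H] [CompleteSpace H]
    {T : H →L[ℂ] H} (hT : T.IsPositive) (u v : H) :
    ‖(inner ℂ u (T v) : ℂ)‖ ^ 2 ≤ (inner ℂ u (T u) : ℂ).re * (inner ℂ v (T v) : ℂ).re := by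
  set c : ℂ := (inner ℂ u (T v) : ℂ) with hc
  by_cases h0 : c = 0
  · rw [h0]
    simp only [norm_zero]
    have h1 := hT.re_inner_nonneg_right u
    have h2 := hT.re_inner_nonneg_right v
    simp only [RCLike.re_to_complex] at h1 h2
    nlinarith [h1, h2]
  · set m : ℝ := ‖c‖ with hmdef
    have hm0 : (0:ℝ) < m := by
      simpa [hmdef] using (norm_pos_iff.mpr h0)
    set u' : H := ((c / (m : ℂ)) • u) with hu'
    have hcc : (starRingEnd ℂ) c * c = ((m ^ 2 : ℝ) : ℂ) := by
      rw [mul_comm, Complex.mul_conj, Complex.normSq_eq_norm_sq, ← hmdef]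
    have h1 : (inner ℂ u' (T v) : ℂ) = (m : ℂ) := by
      have hm' : (m:ℂ) ≠ 0 := by exact_mod_cast hm0.ne'
      rw [hu', inner_smul_left, ← hc, map_div₀, Complex.conj_ofReal, div_mul_eq_mul_div, hcc]
      push_cast
      rw [pow_two, mul_div_assoc, div_self hm', mul_one]
    have h2 : (inner ℂ u' (T u') : ℂ) = inner ℂ u (T u) := by
      rw [hu', map_smul, inner_smul_left, inner_smul_right, ← mul_assoc, map_div₀,
        Complex.conj_ofReal, div_mul_div_comm, hcc]
      have : ((m:ℂ) * (m:ℂ)) = ((m^2:ℝ):ℂ) := by push_cast; ring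
      rw [this, div_self (by exact_mod_cast (by positivity : ((m^2:ℝ)) ≠ 0)), one_mul]
    have := cs_real hT u' v h1
    rw [h2] at this
    simpa [hmdef] using this

lemma arith_key {a b ε : ℝ} (hε0 : 0 ≤ ε) (hε1 : ε ≤ 1/2)
    (hb0 : 0 ≤ b) (hbε : b ≤ ε) (ha1 : 1 - ε ≤ a) (ha2 : a ≤ 1) :
    Real.sqrt (a * b) + Real.sqrt ((1 - a) * (1 - b)) ≤ 2 * Real.sqrt (ε * (1 - ε)) := by
  have ha0 : 0 ≤ a := by linarith
  have hb1 : b ≤ 1 := by linarith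
  set p := Real.sqrt (a * b) with hp
  set q := Real.sqrt ((1 - a) * (1 - b)) with hq
  set s := Real.sqrt (ε * (1 - ε)) with hs
  have hp0 : 0 ≤ p := Real.sqrt_nonneg _
  have hq0 : 0 ≤ q := Real.sqrt_nonneg _
  have hs0 : 0 ≤ s := Real.sqrt_nonneg _
  have hp2 : p ^ 2 = a * b := Real.sq_sqrt (by nlinarith)
  have hq2 : q ^ 2 = (1 - a) * (1 - b) := Real.sq_sqrt (by nlinarith)
  have hs2 : s ^ 2 = ε * (1 - ε) := Real.sq_sqrt (by nlinarith)
  have hpq : (p * q) ^ 2 = (a * (1 - a)) * (b * (1 - b)) := by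
    rw [mul_pow, hp2, hq2]; ring
  have h2pq : 2 * (p * q) ≤ a * (1 - a) + b * (1 - b) := by
    have hX : 0 ≤ a * (1 - a) := mul_nonneg ha0 (by linarith)
    have hY : 0 ≤ b * (1 - b) := mul_nonneg hb0 (by linarith)
    have hPQ : 0 ≤ p * q := mul_nonneg hp0 hq0
    nlinarith [sq_nonneg (a * (1 - a) - b * (1 - b)), sq_nonneg (a * (1 - a) + b * (1 - b) - 2 * (p * q)), hpq, hX, hY, hPQ]
  have hsq : (p + q) ^ 2 ≤ 4 * (ε * (1 - ε)) := by
    nlinarith [mul_nonneg (by linarith : (0:ℝ) ≤ 2*ε - (b + 1 - a)) (by linarith : (0:ℝ) ≤ 2 - 2*ε - (b + 1 - a))]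
  nlinarith [hsq, hs2, hs0, hp0, hq0]

open ContinuousLinearMap in
lemma half_pos_aux {H : Type*} [NormedAddCommGroup H] [InnerProductSpace ℂ H] [CompleteSpace H] :
    ((1/2 : ℂ) • (1 : H →L[ℂ] H)).IsPositive := by
  constructor
  · rw [← ContinuousLinearMap.isSelfAdjoint_iff_isSymmetric]
    apply IsSelfAdjoint.smul _ (IsSelfAdjoint.one (H →L[ℂ] H))
    simp [IsSelfAdjoint, Complex.ext_iff]
  · intro x
    rw [ContinuousLinearMap.reApplyInnerSelf]
    simp only [ContinuousLinearMap.smul_apply, ContinuousLinearMap.one_apply,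
      inner_smul_left]
    have h1 : (inner ℂ x x : ℂ) = ((‖x‖ ^ 2 : ℝ) : ℂ) := by
      rw [inner_self_eq_norm_sq_to_K]
      norm_cast
    rw [h1]
    have h2 : (starRingEnd ℂ) (1/2) * ((‖x‖ ^ 2 : ℝ) : ℂ) = (((1/2) * ‖x‖ ^ 2 : ℝ) : ℂ) := by
      simp [Complex.ext_iff]
    rw [h2]
    simp only [RCLike.re_to_complex, Complex.ofReal_re]
    positivity

theorem stmt2
    {H : Type*} [NormedAddCommGroup H] [InnerProductSpace ℂ H] [FiniteDimensional ℂ H]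
    (ψx ψy : H) (hψx : ‖ψx‖ = 1) (hψy : ‖ψy‖ = 1)
    {ε : ℝ} (hε0 : 0 ≤ ε) (hε1 : ε ≤ 1 / 2) :
    (∃ Ex Ey : H →L[ℂ] H, Ex.IsPositive ∧ Ey.IsPositive ∧ Ex + Ey = 1 ∧
        1 - ε ≤ (inner ℂ ψx (Ex ψx) : ℂ).re ∧ 1 - ε ≤ (inner ℂ ψy (Ey ψy) : ℂ).re) ↔
      ‖(inner ℂ ψx ψy : ℂ)‖ ≤ 2 * Real.sqrt (ε * (1 - ε)) := by
  have hxx : (inner ℂ ψx ψx : ℂ) = 1 := by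
    rw [inner_self_eq_norm_sq_to_K, hψx]; norm_num
  have hyy : (inner ℂ ψy ψy : ℂ) = 1 := by
    rw [inner_self_eq_norm_sq_to_K, hψy]; norm_num
  constructor
  · rintro ⟨Ex, Ey, hEx, hEy, hsum, hx, hy⟩
    have happ : ∀ v : H, Ey v = v - Ex v := by
      intro v
      have := congrArg (fun T : H →L[ℂ] H => T v) hsum
      simp only [ContinuousLinearMap.add_apply, ContinuousLinearMap.one_apply] at this
      linear_combination (norm := module) this
    set a : ℝ := (inner ℂ ψx (Ex ψx) : ℂ).re with ha
    set b : ℝ := (inner ℂ ψy (Ex ψy) : ℂ).re with hb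
    -- relation for Ey inner products
    have hEyx : (inner ℂ ψx (Ey ψx) : ℂ).re = 1 - a := by
      rw [happ, inner_sub_right, Complex.sub_re, hxx]
      norm_num
      rfl
    have hEyy : (inner ℂ ψy (Ey ψy) : ℂ).re = 1 - b := by
      rw [happ, inner_sub_right, Complex.sub_re, hyy]
      norm_num
      rfl
    have ha1 : 1 - ε ≤ a := hx
    have ha2 : a ≤ 1 := by
      have := hEy.re_inner_nonneg_right ψx
      simp only [RCLike.re_to_complex] at this
      rw [hEyx] at this; linarith
    have hb0 : 0 ≤ b := by
      have := hEx.re_inner_nonneg_right ψy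
      simpa only [RCLike.re_to_complex] using this
    have hbε : b ≤ ε := by rw [hEyy] at hy; linarith
    -- decompose inner ℂ product
    have hdecomp : (inner ℂ ψx ψy : ℂ) = inner ℂ ψx (Ex ψy) + inner ℂ ψx (Ey ψy) := by
      rw [← inner_add_right, happ]
      congr 1
      abel
    have h1 : ‖(inner ℂ ψx (Ex ψy) : ℂ)‖ ≤ Real.sqrt (a * b) := by
      rw [Real.le_sqrt (norm_nonneg _) (mul_nonneg (by linarith) hb0)]
      exact cs_op hEx ψx ψy
    have h2 : ‖(inner ℂ ψx (Ey ψy) : ℂ)‖ ≤ Real.sqrt ((1 - a) * (1 - b)) := by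
      rw [Real.le_sqrt (norm_nonneg _) (mul_nonneg (by linarith) (by linarith))]
      have := cs_op hEy ψx ψy
      rwa [hEyx, hEyy] at this
    calc ‖(inner ℂ ψx ψy : ℂ)‖
        ≤ ‖(inner ℂ ψx (Ex ψy) : ℂ)‖ + ‖(inner ℂ ψx (Ey ψy) : ℂ)‖ := by
          rw [hdecomp]; exact norm_add_le _ _
      _ ≤ Real.sqrt (a * b) + Real.sqrt ((1 - a) * (1 - b)) := add_le_add h1 h2
      _ ≤ 2 * Real.sqrt (ε * (1 - ε)) := arith_key hε0 hε1 hb0 hbε ha1 ha2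
  · intro hr
    -- general rank-one measurement construction helper
    by_cases hεhalf : ε = 1/2
    · refine ⟨(1/2 : ℂ) • 1, (1/2 : ℂ) • 1, ?_, ?_, ?_, ?_, ?_⟩
      · exact half_pos_aux
      · exact half_pos_aux
      · rw [← add_smul]; norm_num
      · rw [ContinuousLinearMap.smul_apply, ContinuousLinearMap.one_apply,
          inner_smul_right, hxx, hεhalf]
        norm_num
      · rw [ContinuousLinearMap.smul_apply, ContinuousLinearMap.one_apply,
          inner_smul_right, hyy, hεhalf]
        norm_num
    · have hεlt : ε < 1/2 := lt_of_le_of_ne hε1 hεhalf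
      set c : ℂ := (inner ℂ ψx ψy : ℂ) with hc
      set r : ℝ := ‖c‖ with hrdef
      have hr0 : 0 ≤ r := norm_nonneg _
      have hs2 : Real.sqrt (ε * (1 - ε)) ^ 2 = ε * (1 - ε) := Real.sq_sqrt (by nlinarith)
      have hr2 : r ^ 2 ≤ 4 * (ε * (1 - ε)) := by nlinarith [Real.sqrt_nonneg (ε * (1 - ε))]
      have hrlt1 : r < 1 := by nlinarith
      set z : ℂ := if c = 0 then 1 else (r : ℂ) / c with hz
      have hzabs : Complex.normSq z = 1 := by
        rw [hz]
        split_ifs with h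
        · simp
        · rw [Complex.normSq_div]
          rw [Complex.normSq_ofReal, hrdef, ← Complex.sq_norm]
          field_simp [norm_ne_zero_iff.mpr h]
      set ψy' : H := z • ψy with hψy'
      have hxy' : (inner ℂ ψx ψy' : ℂ) = (r : ℂ) := by
        rw [hψy', inner_smul_right, ← hc, hz]
        split_ifs with h
        · simp [h, hrdef]
        · field_simp
      have hyx' : (inner ℂ ψy' ψx : ℂ) = (r : ℂ) := by
        rw [← inner_conj_symm, hxy', Complex.conj_ofReal]
      have hy'y' : (inner ℂ ψy' ψy' : ℂ) = 1 := by
        rw [hψy', inner_smul_left, inner_smul_right, hyy, mul_one, mul_comm,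
          Complex.mul_conj, hzabs]
        norm_num
      set t1 : ℝ := Real.sqrt (1 - ε) with ht1
      set t2 : ℝ := Real.sqrt ε with ht2
      set R : ℝ := Real.sqrt (1 - r ^ 2) with hR
      have ht1s : t1 ^ 2 = 1 - ε := Real.sq_sqrt (by linarith)
      have ht2s : t2 ^ 2 = ε := Real.sq_sqrt hε0
      have hR2 : R ^ 2 = 1 - r ^ 2 := Real.sq_sqrt (by nlinarith)
      have hR0 : 0 < R := Real.sqrt_pos.mpr (by nlinarith)
      have hRne : (R : ℂ) ≠ 0 := by exact_mod_cast hR0.ne'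
      have ht10 : 0 ≤ t1 := Real.sqrt_nonneg _
      have ht20 : 0 ≤ t2 := Real.sqrt_nonneg _
      have hR1 : R ≤ 1 := by nlinarith
      have hRlow : 1 - 2 * ε ≤ R := by nlinarith
      have hrle : r ≤ 2 * (t2 * t1) := by
        have : Real.sqrt (ε * (1 - ε)) = t2 * t1 := by
          rw [ht2, ht1, ← Real.sqrt_mul hε0]
        rw [← this]; linarith [hr]
      -- the measurement vector
      set w : H := (t1 : ℂ) • ψx - ((t2 / R : ℝ) : ℂ) • (ψy' - (r : ℂ) • ψx) with hw
      have hwx : (inner ℂ w ψx : ℂ) = (t1 : ℂ) := by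
        rw [hw]
        simp only [inner_sub_left, inner_smul_left, hxx, hyx', Complex.conj_ofReal]
        push_cast
        ring
      have hxw : (inner ℂ ψx w : ℂ) = (t1 : ℂ) := by
        rw [← inner_conj_symm, hwx, Complex.conj_ofReal]
      have hwy' : (inner ℂ w ψy' : ℂ) = ((t1 * r - t2 * R : ℝ) : ℂ) := by
        rw [hw]
        simp only [inner_sub_left, inner_smul_left, hxy', hy'y', Complex.conj_ofReal]
        norm_cast
        field_simp
        linear_combination t2 * hR2
      have hww2 : t1 ^ 2 = 1 - t2 ^ 2 := by rw [ht1s, ht2s]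
      have hww : (inner ℂ w w : ℂ) = 1 := by
        rw [hw]
        simp only [inner_sub_left, inner_sub_right, inner_smul_left, inner_smul_right,
          hxx, hy'y', hxy', hyx', Complex.conj_ofReal]
        norm_cast
        field_simp
        linear_combination (R*R) * hww2 - (t2*t2) * hR2
      have hnormw : ‖w‖ = 1 := by
        have h1 := hww
        rw [inner_self_eq_norm_sq_to_K, ← RCLike.ofReal_pow, ← RCLike.ofReal_one (K := ℂ)] at h1
        have h3 : ‖w‖ ^ 2 = 1 := RCLike.ofReal_inj.mp h1
        rw [← Real.sqrt_sq (norm_nonneg w), h3, Real.sqrt_one]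
      set E : H →L[ℂ] H := (innerSL ℂ w).smulRight w with hE
      have hEapp : ∀ v : H, E v = (inner ℂ w v : ℂ) • w := fun v => rfl
      have hEpos : E.IsPositive := by
        constructor
        · intro a b
          simp only [ContinuousLinearMap.coe_coe, hEapp, inner_smul_left, inner_smul_right,
            ← inner_conj_symm w a, Complex.conj_conj]
          ring
        · intro x
          have hterm : (inner ℂ (E x) x : ℂ) = ((Complex.normSq (inner ℂ w x : ℂ) : ℝ) : ℂ) := by
            rw [hEapp, inner_smul_left, ← Complex.normSq_conj (inner ℂ w x : ℂ),
              ← Complex.mul_conj ((starRingEnd ℂ) (inner ℂ w x : ℂ)), Complex.conj_conj]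
          rw [ContinuousLinearMap.reApplyInnerSelf, hterm]
          simp [Complex.normSq_nonneg]
      have hE1pos : ((1 : H →L[ℂ] H) - E).IsPositive := by
        constructor
        · exact ContinuousLinearMap.isSelfAdjoint_iff_isSymmetric.mp (IsSelfAdjoint.sub (IsSelfAdjoint.one (H →L[ℂ] H)) hEpos.isSelfAdjoint)
        · intro x
          have hterm : (inner ℂ (E x) x : ℂ) = ((Complex.normSq (inner ℂ w x : ℂ) : ℝ) : ℂ) := by
            rw [hEapp, inner_smul_left, ← Complex.normSq_conj (inner ℂ w x : ℂ),
              ← Complex.mul_conj ((starRingEnd ℂ) (inner ℂ w x : ℂ)), Complex.conj_conj]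
          rw [ContinuousLinearMap.reApplyInnerSelf]
          simp only [ContinuousLinearMap.sub_apply, ContinuousLinearMap.one_apply,
            inner_sub_left, hterm, Complex.sub_re, Complex.ofReal_re, RCLike.re_to_complex]
          have hx2 : (inner ℂ x x : ℂ).re = ‖x‖ ^ 2 := by
            rw [inner_self_eq_norm_sq_to_K]
            norm_cast
          rw [hx2]
          have hile : ‖(inner ℂ w x : ℂ)‖ ≤ ‖x‖ := by
            have := norm_inner_le_norm (𝕜 := ℂ) w x
            rwa [hnormw, one_mul] at this
          have : Complex.normSq (inner ℂ w x : ℂ) ≤ ‖x‖ ^ 2 := by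
            rw [Complex.normSq_eq_norm_sq]
            have habs : ‖(inner ℂ w x : ℂ)‖ = ‖(inner ℂ w x : ℂ)‖ := rfl
            nlinarith [norm_nonneg (inner ℂ w x : ℂ), norm_nonneg x, hile]
          linarith
      refine ⟨E, 1 - E, hEpos, hE1pos, by abel, ?_, ?_⟩
      · have : (inner ℂ ψx (E ψx) : ℂ) = ((t1 * t1 : ℝ) : ℂ) := by
          rw [hEapp, inner_smul_right, hwx, hxw]
          push_cast
          ring
        rw [this, Complex.ofReal_re]
        nlinarith [ht1s]
      · -- bound for ψy
        have hq : (inner ℂ w ψy' : ℂ) = z * (inner ℂ w ψy : ℂ) := by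
          rw [hψy', inner_smul_right]
        have hnsq : Complex.normSq (inner ℂ w ψy : ℂ) = (t1 * r - t2 * R) ^ 2 := by
          have h1 : Complex.normSq (inner ℂ w ψy' : ℂ) = (t1 * r - t2 * R) ^ 2 := by
            rw [hwy', Complex.normSq_ofReal]
            ring
          rw [hq, Complex.normSq_mul, hzabs, one_mul] at h1
          exact h1
        have hcalc : (inner ℂ ψy (((1 : H →L[ℂ] H) - E) ψy) : ℂ).re
            = 1 - (t1 * r - t2 * R) ^ 2 := by
          simp only [ContinuousLinearMap.sub_apply, ContinuousLinearMap.one_apply,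
            inner_sub_right, hEapp, inner_smul_right]
          have : (inner ℂ w ψy : ℂ) * (inner ℂ ψy w : ℂ)
              = ((Complex.normSq (inner ℂ w ψy : ℂ) : ℝ) : ℂ) := by
            rw [← inner_conj_symm w ψy, mul_comm, ← Complex.mul_conj, Complex.conj_conj]
            ring
          rw [this, hyy, hnsq, Complex.sub_re, Complex.ofReal_re]
          norm_num
        rw [hcalc]
        -- show (t1 r - t2 R)^2 ≤ ε
        set q : ℝ := t1 * r - t2 * R with hqdef
        have hq_le : q ≤ t2 := by
          nlinarith [mul_le_mul_of_nonneg_left hrle ht10,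
            mul_le_mul_of_nonneg_left hRlow ht20, ht1s, ht2s]
        have hq_ge : -t2 ≤ q := by
          nlinarith [mul_nonneg ht10 hr0, mul_le_mul_of_nonneg_left hR1 ht20]
        nlinarith [ht2s, hq_le, hq_ge]
end

section
/- Let S be a finite index set, m ≥ 2 an integer, f : S → ℤ_m a function, H a finite-dimensional complex Hilbert space, {Π_z}_{z ∈ ℤ_m} pairwise orthogonal projections on H with Σ_z Π_z = I, and (v_x)_{x ∈ S} arbitrary vectors in H. For each i ∈ {0,1,…,m−1}, let X_i be the matrix with rows indexed by S whose x-th row is the vector Π_{f(x)+i} v_x (indices taken mod m). Let ρ be the S×S Gram matrix ρ[x,y] = ⟨v_y, v_x⟩ and let F be the S×S zero-one matrix with F[x,y] = 1 iff f(x) ≠ f(y). Then ρ ∘ F = Σ_{i ≠ j} X_i X_j^*, where the sum is over all ordered pairs i ≠ j in {0,1,…,m−1}. -/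
open scoped Matrix

theorem stmt18
    {S : Type*} [Fintype S] [DecidableEq S]
    {m : ℕ} [NeZero m] (hm : 2 ≤ m)
    (f : S → ZMod m)
    {H : Type*} [NormedAddCommGroup H] [InnerProductSpace ℂ H] [FiniteDimensional ℂ H]
    (P : ZMod m → H →L[ℂ] H)
    (hPidem : ∀ z, P z ∘L P z = P z)
    (hPadj : ∀ z, ContinuousLinearMap.adjoint (P z) = P z)
    (hPorth : ∀ z w, z ≠ w → P z ∘L P w = 0)
    (hPsum : ∑ z : ZMod m, P z = 1)
    (v : S → H)
    {d : ℕ} (b : OrthonormalBasis (Fin d) ℂ H)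
    (X : ZMod m → Matrix S (Fin d) ℂ)
    (hX : ∀ i x k, X i x k = b.repr (P (f x + i) (v x)) k)
    (ρ : Matrix S S ℂ)
    (hρ : ρ = Matrix.of fun x y => (inner ℂ (v y) (v x) : ℂ))
    (F : Matrix S S ℂ)
    (hF : F = Matrix.of fun x y => if f x ≠ f y then 1 else 0) :
    ρ ⊙ F = ∑ i : ZMod m, ∑ j : ZMod m,
      if i ≠ j then X i * (X j)ᴴ else 0 := by
  ext x y
  rw [hρ, hF]
  simp only [Matrix.hadamard_apply, Matrix.of_apply, Matrix.sum_apply]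
  have hentry : ∀ i j : ZMod m, (X i * (X j)ᴴ) x y
      = inner ℂ (v y) ((P (f y + j) ∘L P (f x + i)) (v x)) := by
    intro i j
    rw [Matrix.mul_apply]
    have h1 : (inner ℂ (P (f y + j) (v y)) (P (f x + i) (v x)) : ℂ)
        = inner ℂ (v y) ((P (f y + j) ∘L P (f x + i)) (v x)) := by
      conv_lhs => rw [← hPadj (f y + j)]
      rw [ContinuousLinearMap.adjoint_inner_left]
      rfl
    rw [← h1, ← b.repr.inner_map_map]
    rw [PiLp.inner_apply]
    refine Finset.sum_congr rfl fun k _ => ?_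
    simp [Matrix.conjTranspose_apply, hX, mul_comm, RCLike.inner_apply]
  have hterm : ∀ i j : ZMod m, (if i ≠ j then X i * (X j)ᴴ else 0) x y
      = if i ≠ j then (inner ℂ (v y) ((P (f y + j) ∘L P (f x + i)) (v x)) : ℂ) else 0 := by
    intro i j
    split
    · exact hentry i j
    · rfl
  simp only [hterm]
  by_cases hf : f x = f y
  · rw [if_neg (by simpa using hf), mul_zero]
    symm
    refine Finset.sum_eq_zero fun i _ => Finset.sum_eq_zero fun j _ => ?_
    split
    · rename_i hij
      have hne : f y + j ≠ f x + i := by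
        rw [hf]
        exact fun h => hij (add_left_cancel h).symm
      rw [hPorth _ _ hne]
      simp
    · rfl
  · rw [if_pos (by simpa using hf), mul_one]
    have hinner : ∀ i : ZMod m,
        (∑ j : ZMod m, if i ≠ j then
          (inner ℂ (v y) ((P (f y + j) ∘L P (f x + i)) (v x)) : ℂ) else 0)
        = inner ℂ (v y) (P (f x + i) (v x)) := by
      intro i
      have hj0 : f x + i - f y ≠ i := by
        intro h
        apply hf
        have h2 : f x + i = f y + i := by
          have := sub_eq_iff_eq_add.mp h
          rw [this]; ring
        exact add_right_cancel h2
      rw [Finset.sum_eq_single (f x + i - f y)]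
      · rw [if_pos (Ne.symm hj0)]
        have hfeq : f y + (f x + i - f y) = f x + i := by ring
        rw [hfeq, hPidem]
      · intro j _ hjne
        by_cases hij : i = j
        · rw [if_neg (by simpa using hij)]
        · rw [if_pos hij]
          have hne : f y + j ≠ f x + i := by
            intro h
            exact hjne (by rw [← h]; ring)
          rw [hPorth _ _ hne]
          simp
      · intro h
        exact absurd (Finset.mem_univ _) h
    simp only [hinner]
    rw [← inner_sum]
    congr 1
    rw [← ContinuousLinearMap.sum_apply]
    have hsum' : ∑ i : ZMod m, P (f x + i) = ∑ z : ZMod m, P z :=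
      Fintype.sum_equiv (Equiv.addLeft (f x)) _ _ (fun i => rfl)
    rw [hsum', hPsum]
    rfl
end
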